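/- arXiv:0904.2104 — 5 statements merged into one kernel-verified Lean document; each statement's English description precedes it below -/
import Mathlib

section
/- Let (H, P, (S_1,…,S_d)) be a minimal Popescu dilation of a Popescu system (v_1,…,v_d) on K. Then the operators Λ^n(P), n ≥ 0, where Λ(X) = Σ_{k=1}^d S_k X S_k*, form an increasing sequence of orthogonal projections which converges to the identity of H in the strong operator topology. -/
/-!
The Cuntz relations make `Λ` a `⋆`-endomorphism of `B(H)`, so every `Λⁿ(P)` is a projection.
Co-invariance of `K` under the `Sₖ*` together with `∑ Sₖ Sₖ* = 1` gives `Λ(P) P = P`, and applying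
`Λⁿ` yields `Λⁿ⁺¹(P) Λⁿ(P) = Λⁿ(P)`: the sequence increases. Since `Λᵐ(X) S_I = S_I X` for
`|I| = m`, each `S_I ξ` with `ξ ∈ K` is fixed by `Λⁿ(P)` once `n ≥ |I|`. The `Λⁿ(P)` have norm
at most one, so convergence on the total set of these vectors extends to all of `H`.
-/

open ContinuousLinearMap Filter
open scoped ComplexInnerProductSpace ComplexOrder

noncomputable section

/-- The operator `S_I = S_{i₁} ⋯ S_{i_m}` associated to a finite multi-index
(the empty multi-index gives the identity). -/
def cword {d : ℕ} {H : Type*} [NormedAddCommGroup H] [InnerProductSpace ℂ H]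
    (S : Fin d → H →L[ℂ] H) (I : List (Fin d)) : H →L[ℂ] H :=
  (I.map S).prod

/-- A Cuntz family: `Sᵢ* Sⱼ = δᵢⱼ 1` and `∑ₖ Sₖ Sₖ* = 1`. -/
def IsCuntzFamily {d : ℕ} {H : Type*} [NormedAddCommGroup H] [InnerProductSpace ℂ H]
    [CompleteSpace H] (S : Fin d → H →L[ℂ] H) : Prop :=
  (∀ i j : Fin d, adjoint (S i) ∘L S j = if i = j then 1 else 0) ∧
    ∑ k : Fin d, S k ∘L adjoint (S k) = 1

/-- A Popescu system: `∑ₖ vₖ vₖ* = 1`. -/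
def IsPopescuSystem {d : ℕ} {K : Type*} [NormedAddCommGroup K] [InnerProductSpace ℂ K]
    [CompleteSpace K] (v : Fin d → K →L[ℂ] K) : Prop :=
  ∑ k : Fin d, v k ∘L adjoint (v k) = 1

/-- A minimal Popescu dilation of a Popescu system `v` on `K`: `H` contains `K` as a closed
subspace via the isometric embedding `ι` (so `P = ι ∘ ι*` is the orthogonal projection of `H`
onto the copy of `K`), `S` is a Cuntz family leaving the copy of `K` invariant under every
`Sₖ*` (`P Sₖ* P = Sₖ* P`), the compression of `Sₖ` to `K` is `vₖ`, and the vectors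
`S_I ξ`, `ξ ∈ K`, are total in `H`. -/
def IsMinimalDilation {d : ℕ} {K H : Type*}
    [NormedAddCommGroup K] [InnerProductSpace ℂ K] [CompleteSpace K]
    [NormedAddCommGroup H] [InnerProductSpace ℂ H] [CompleteSpace H]
    (v : Fin d → K →L[ℂ] K) (ι : K →L[ℂ] H) (S : Fin d → H →L[ℂ] H) : Prop :=
  IsCuntzFamily S ∧
  adjoint ι ∘L ι = 1 ∧
  (∀ k, (ι ∘L adjoint ι) ∘L adjoint (S k) ∘L (ι ∘L adjoint ι) = adjoint (S k) ∘L (ι ∘L adjoint ι)) ∧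
  (∀ k, adjoint ι ∘L S k ∘L ι = v k) ∧
  Dense ((Submodule.span ℂ {x : H | ∃ (I : List (Fin d)) (ξ : K), x = cword S I (ι ξ)} :
    Submodule ℂ H) : Set H)


/-- The canonical endomorphism `Λ(X) = ∑ₖ Sₖ X Sₖ*`. -/
def cLam {d : ℕ} {H : Type*} [NormedAddCommGroup H] [InnerProductSpace ℂ H] [CompleteSpace H]
    (S : Fin d → H →L[ℂ] H) (X : H →L[ℂ] H) : H →L[ℂ] H :=
  ∑ k : Fin d, S k ∘L X ∘L adjoint (S k)

open Topology

theorem tendsto_apply_self_of_dense_span {𝕜 E ι : Type*} [NontriviallyNormedField 𝕜]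
    [NormedAddCommGroup E] [NormedSpace 𝕜 E] {l : Filter ι} {T : ι → E →L[𝕜] E} {C : ℝ}
    (hT : ∀ i, ‖T i‖ ≤ C) {s : Set E} (hs : Dense (Submodule.span 𝕜 s : Set E))
    (hconv : ∀ y ∈ s, Tendsto (T · y) l (𝓝 y)) (x : E) :
    Tendsto (T · x) l (𝓝 x) := by
  let A : Submodule 𝕜 E :=
    { carrier := {x | Tendsto (T · x) l (𝓝 x)}
      add_mem' := fun hx hy => by simpa using hx.add hy
      zero_mem' := by simpa using tendsto_const_nhds
      smul_mem' := fun c _ hx => by simpa using hx.const_smul c }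
  have hequi : Equicontinuous ((↑) ∘ T : ι → E → E) :=
    ((NormedSpace.equicontinuous_TFAE T).out 5 1).mp (⟨C, hT⟩ : ∃ C, ∀ i, ‖T i‖ ≤ C)
  have hA : IsClosed (A : Set E) := hequi.isClosed_setOfPred_tendsto continuous_id
  have hspan : (Submodule.span 𝕜 s : Set E) ⊆ A := Submodule.span_le.mpr hconv
  exact (hs.closure_eq ▸ hA.closure_subset_iff.mpr hspan) (Set.mem_univ x)

theorem mul_eq_right_of_le {M : Type*} [Semigroup M] {q : ℕ → M}
    (hq : ∀ n, q (n + 1) * q n = q n) {m n : ℕ} (hm : IsIdempotentElem (q m)) (hmn : m ≤ n) :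
    q n * q m = q m := by
  induction n, hmn using Nat.le_induction with
  | base => exact hm
  | succ n _ ih => rw [← ih, ← mul_assoc, hq n]

section CuntzEndomorphism

variable {d : ℕ} {H : Type*} [NormedAddCommGroup H] [InnerProductSpace ℂ H] [CompleteSpace H]
  {S : Fin d → H →L[ℂ] H}

theorem cLam_eq_sum_mul (S : Fin d → H →L[ℂ] H) (X : H →L[ℂ] H) :
    cLam S X = ∑ k, S k * X * star (S k) := by
  simp only [cLam, ← mul_def, ← star_eq_adjoint, mul_assoc]

theorem star_cLam (X : H →L[ℂ] H) : star (cLam S X) = cLam S (star X) := by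
  simp only [cLam_eq_sum_mul, star_sum, star_mul, star_star, mul_assoc]

variable (hS : ∀ i j, star (S i) * S j = if i = j then 1 else 0)
include hS

theorem cLam_mul_S (X : H →L[ℂ] H) (i : Fin d) : cLam S X * S i = S i * X := by
  have term (k : Fin d) : S k * X * star (S k) * S i = if k = i then S k * X else 0 := by
    rw [mul_assoc, hS]; split_ifs <;> simp
  simp [cLam_eq_sum_mul, Finset.sum_mul, term]

theorem cLam_mul (X Y : H →L[ℂ] H) : cLam S X * cLam S Y = cLam S (X * Y) := by
  simp only [cLam_eq_sum_mul (X := Y), Finset.mul_sum, ← mul_assoc, cLam_mul_S hS]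
  simp only [cLam_eq_sum_mul, mul_assoc]

theorem isStarProjection_cLam {P : H →L[ℂ] H} (hP : IsStarProjection P) :
    IsStarProjection (cLam S P) :=
  ⟨by rw [IsIdempotentElem, cLam_mul hS, hP.isIdempotentElem.eq],
    by rw [IsSelfAdjoint, star_cLam, hP.isSelfAdjoint.star_eq]⟩

theorem isStarProjection_cLam_iterate {P : H →L[ℂ] H} (hP : IsStarProjection P) (n : ℕ) :
    IsStarProjection ((cLam S)^[n] P) := by
  induction n with
  | zero => exact hP
  | succ n ih => rw [Function.iterate_succ_apply']; exact isStarProjection_cLam hS ih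

theorem cLam_iterate_length_mul_cword (X : H →L[ℂ] H) (I : List (Fin d)) :
    (cLam S)^[I.length] X * cword S I = cword S I * X := by
  induction I generalizing X with
  | nil => simp [cword]
  | cons i I ih =>
    have hcons : cword S (i :: I) = S i * cword S I := by simp [cword, mul_def]
    rw [hcons, List.length_cons, Function.iterate_succ_apply', ← mul_assoc, cLam_mul_S hS,
      mul_assoc, ih, mul_assoc]

end CuntzEndomorphism

namespace IsMinimalDilation

variable {d : ℕ} {K H : Type*} [NormedAddCommGroup K] [InnerProductSpace ℂ K] [CompleteSpace K]
  [NormedAddCommGroup H] [InnerProductSpace ℂ H] [CompleteSpace H]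
  {v : Fin d → K →L[ℂ] K} {ι : K →L[ℂ] H} {S : Fin d → H →L[ℂ] H}
  (hdil : IsMinimalDilation v ι S)
include hdil

theorem star_mul_eq (i j : Fin d) : star (S i) * S j = if i = j then 1 else 0 := by
  simpa [mul_def, star_eq_adjoint] using hdil.1.1 i j

theorem proj_comp_self : (ι ∘L adjoint ι) ∘L ι = ι := by
  rw [comp_assoc, hdil.2.1, one_def, comp_id]

theorem isStarProjection_proj : IsStarProjection (ι ∘L adjoint ι) :=
  ⟨by rw [IsIdempotentElem, mul_def, ← comp_assoc, hdil.proj_comp_self],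
    by rw [IsSelfAdjoint, star_eq_adjoint, adjoint_comp, adjoint_adjoint]⟩

theorem cLam_proj_mul_proj : cLam S (ι ∘L adjoint ι) * (ι ∘L adjoint ι) = ι ∘L adjoint ι := by
  set P := ι ∘L adjoint ι
  have hinv (k : Fin d) : P * (star (S k) * P) = star (S k) * P := by
    simpa [mul_def, star_eq_adjoint] using hdil.2.2.1 k
  have hsum : ∑ k, S k * star (S k) = 1 := by
    simpa [mul_def, star_eq_adjoint] using hdil.1.2
  calc cLam S P * P = ∑ k, S k * (P * (star (S k) * P)) := by
        simp only [cLam_eq_sum_mul, Finset.sum_mul, mul_assoc]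
    _ = P := by simp only [hinv, ← mul_assoc, ← Finset.sum_mul, hsum, one_mul]

theorem cLam_iterate_succ_mul (n : ℕ) :
    (cLam S)^[n + 1] (ι ∘L adjoint ι) * (cLam S)^[n] (ι ∘L adjoint ι) =
      (cLam S)^[n] (ι ∘L adjoint ι) := by
  induction n with
  | zero => exact hdil.cLam_proj_mul_proj
  | succ n ih =>
    rw [Function.iterate_succ_apply'] at ih
    rw [Function.iterate_succ_apply', Function.iterate_succ_apply' _ n,
      cLam_mul hdil.star_mul_eq, ih]

theorem cLam_iterate_apply_cword (I : List (Fin d)) (ξ : K) {n : ℕ} (hn : I.length ≤ n) :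
    (cLam S)^[n] (ι ∘L adjoint ι) (cword S I (ι ξ)) = cword S I (ι ξ) := by
  set Q := fun m => (cLam S)^[m] (ι ∘L adjoint ι)
  have hQ := isStarProjection_cLam_iterate hdil.star_mul_eq hdil.isStarProjection_proj
  have hfix : Q I.length (cword S I (ι ξ)) = cword S I (ι ξ) := by
    calc Q I.length (cword S I (ι ξ)) = (Q I.length * cword S I) (ι ξ) := rfl
      _ = cword S I (((ι ∘L adjoint ι) ∘L ι) ξ) := by
        rw [cLam_iterate_length_mul_cword hdil.star_mul_eq]; rfl
      _ = cword S I (ι ξ) := by rw [hdil.proj_comp_self]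
  show Q n (cword S I (ι ξ)) = _
  calc Q n (cword S I (ι ξ)) = Q n (Q I.length (cword S I (ι ξ))) := by rw [hfix]
    _ = Q I.length (cword S I (ι ξ)) :=
      DFunLike.congr_fun
        (mul_eq_right_of_le (q := Q) hdil.cLam_iterate_succ_mul (hQ _).isIdempotentElem hn) _
    _ = cword S I (ι ξ) := hfix

theorem tendsto_cLam_iterate_apply (x : H) :
    Tendsto (fun n => (cLam S)^[n] (ι ∘L adjoint ι) x) atTop (𝓝 x) := by
  refine tendsto_apply_self_of_dense_span (C := 1) (fun n => IsStarProjection.norm_le _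
    (isStarProjection_cLam_iterate hdil.star_mul_eq hdil.isStarProjection_proj n))
    hdil.2.2.2.2 ?_ x
  rintro _ ⟨I, ξ, rfl⟩
  exact tendsto_const_nhds.congr'
    (eventually_atTop.2 ⟨I.length, fun n hn => (hdil.cLam_iterate_apply_cword I ξ hn).symm⟩)

end IsMinimalDilation

theorem lam_iterate_proj_increasing_tendsto_one_general {d : ℕ}
    {K H : Type*} [NormedAddCommGroup K] [InnerProductSpace ℂ K] [CompleteSpace K]
    [NormedAddCommGroup H] [InnerProductSpace ℂ H] [CompleteSpace H]
    (v : Fin d → K →L[ℂ] K)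
    (ι : K →L[ℂ] H) (S : Fin d → H →L[ℂ] H) (hdil : IsMinimalDilation v ι S) :
    (∀ n : ℕ, IsSelfAdjoint ((cLam S)^[n] (ι ∘L adjoint ι)) ∧
        IsIdempotentElem ((cLam S)^[n] (ι ∘L adjoint ι))) ∧
    (∀ n : ℕ, ((cLam S)^[n + 1] (ι ∘L adjoint ι) - (cLam S)^[n] (ι ∘L adjoint ι)).IsPositive) ∧
    (∀ x : H, Filter.Tendsto (fun n : ℕ => ((cLam S)^[n] (ι ∘L adjoint ι)) x)
        Filter.atTop (nhds x)) := by
  have hQ := isStarProjection_cLam_iterate hdil.star_mul_eq hdil.isStarProjection_proj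
  refine ⟨fun n => ⟨(hQ n).isSelfAdjoint, (hQ n).isIdempotentElem⟩, fun n => ?_,
    hdil.tendsto_cLam_iterate_apply⟩
  exact IsPositive.of_isStarProjection
    ((hQ n).sub_of_mul_eq_right (hQ (n + 1)) (hdil.cLam_iterate_succ_mul n))

/-- In a minimal Popescu dilation `(H, P, S)` of a Popescu system `v` on `K`
(with `P = ι ∘ ι*`), the operators `Λⁿ(P)` form an increasing sequence of orthogonal
projections converging strongly to the identity of `H`. -/
theorem lam_iterate_proj_increasing_tendsto_one {d : ℕ} (hd : 2 ≤ d)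
    {K H : Type*} [NormedAddCommGroup K] [InnerProductSpace ℂ K] [CompleteSpace K]
    [NormedAddCommGroup H] [InnerProductSpace ℂ H] [CompleteSpace H]
    (v : Fin d → K →L[ℂ] K) (hv : IsPopescuSystem v)
    (ι : K →L[ℂ] H) (S : Fin d → H →L[ℂ] H) (hdil : IsMinimalDilation v ι S) :
    (∀ n : ℕ, IsSelfAdjoint ((cLam S)^[n] (ι ∘L adjoint ι)) ∧
        IsIdempotentElem ((cLam S)^[n] (ι ∘L adjoint ι))) ∧
    (∀ n : ℕ, ((cLam S)^[n + 1] (ι ∘L adjoint ι) - (cLam S)^[n] (ι ∘L adjoint ι)).IsPositive) ∧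
    (∀ x : H, Filter.Tendsto (fun n : ℕ => ((cLam S)^[n] (ι ∘L adjoint ι)) x)
        Filter.atTop (nhds x)) :=
  lam_iterate_proj_increasing_tendsto_one_general v ι S hdil
end
end

section
/- Let (H, P, (S_1,…,S_d)) be a minimal Popescu dilation of a Popescu system (v_1,…,v_d) on K. Then {v_k, v_k* : 1 ≤ k ≤ d}' ⊆ B_τ(K) := {x ∈ B(K) : Σ_{k=1}^d v_k x v_k* = x}, and equality {v_k, v_k* : 1 ≤ k ≤ d}' = B_τ(K) holds if and only if P belongs to the von Neumann algebra {S_k, S_k* : 1 ≤ k ≤ d}'' generated by the Cuntz family. -/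
open ContinuousLinearMap Filter
open scoped ComplexInnerProductSpace ComplexOrder

noncomputable section

/-!
Every `x` commuting with all `vₖ, vₖ*` is a fixed point of `τ(x) = ∑ₖ vₖ x vₖ*` because
`∑ₖ vₖ vₖ* = 1`. The compression `Y ↦ ι* Y ι` maps `{Sₖ, Sₖ*}'` onto the fixed points of `τ`,
since `ι* Sₖ = vₖ ι*`: for a fixed point `x`, the operators `τ_Sⁿ(ι x ι*)` converge strongly,
because on vectors `ι ξ` their increments are orthogonal and on the total set of vectors `S_I ι ξ`
they are shifted by `S_I`. The limit `X` lies in `{Sₖ, Sₖ*}'` and satisfies `ι* X ι = x`.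

If `P = ι ι*` lies in `{Sₖ, Sₖ*}''`, then `X` commutes with `P`, so `x` commutes with
`vₖ = ι* Sₖ ι` and `vₖ* = ι* Sₖ* ι`. Conversely, if the fixed points are exactly the commutant and
`Y ∈ {Sₖ, Sₖ*}'`, then `x = ι* Y ι` commutes with the `vₖ, vₖ*`, and the matrix entries of `Y P`
and `P Y` between the vectors `S_I ι ξ` are `x v_I* v_J` and `v_I* v_J x`, hence equal.
-/

open scoped Topology

theorem mem_centralizer_range_union_range_iff {M α : Type*} [Mul M] {a b : α → M} {x : M} :
    x ∈ Set.centralizer (Set.range a ∪ Set.range b) ↔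
      ∀ k, a k * x = x * a k ∧ b k * x = x * b k := by
  simp [Set.centralizer_union, Set.mem_centralizer_iff, forall_and]

theorem ContinuousLinearMap.comp_ite {R E F G : Type*} [Semiring R]
    [TopologicalSpace E] [AddCommMonoid E] [Module R E]
    [TopologicalSpace F] [AddCommMonoid F] [Module R F]
    [TopologicalSpace G] [AddCommMonoid G] [Module R G]
    (p : Prop) [Decidable p] (g : F →L[R] G) (f f' : E →L[R] F) :
    g ∘L (if p then f else f') = if p then g ∘L f else g ∘L f' := by
  split_ifs <;> rfl

section Words

variable {d : ℕ} {E F : Type*} [NormedAddCommGroup E] [InnerProductSpace ℂ E]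
  [NormedAddCommGroup F] [InnerProductSpace ℂ F]

theorem cword_cons (S : Fin d → E →L[ℂ] E) (i : Fin d) (I : List (Fin d)) :
    cword S (i :: I) = S i ∘L cword S I := rfl

theorem comp_cword_of_comp_eq {S : Fin d → E →L[ℂ] E} {T : Fin d → F →L[ℂ] F} {A : E →L[ℂ] F}
    (h : ∀ k, A ∘L S k = T k ∘L A) (I : List (Fin d)) : A ∘L cword S I = cword T I ∘L A := by
  induction I with
  | nil => rfl
  | cons i I ih => rw [cword_cons, cword_cons, ← comp_assoc, h, comp_assoc, ih, comp_assoc]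

theorem comp_adjoint_cword_of_comp_eq [CompleteSpace E] [CompleteSpace F]
    {S : Fin d → E →L[ℂ] E} {T : Fin d → F →L[ℂ] F} {A : E →L[ℂ] F}
    (h : ∀ k, A ∘L adjoint (S k) = adjoint (T k) ∘L A) (I : List (Fin d)) :
    A ∘L adjoint (cword S I) = adjoint (cword T I) ∘L A := by
  have h' : ∀ k, adjoint A ∘L T k = S k ∘L adjoint A := fun k => by
    simpa only [adjoint_comp, adjoint_adjoint] using (congrArg adjoint (h k)).symm
  simpa only [adjoint_comp, adjoint_adjoint] using
    (congrArg adjoint (comp_cword_of_comp_eq h' I)).symm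

end Words

section Convergence

theorem cauchySeq_of_inner_eq_inner_self {𝕜 E : Type*} [RCLike 𝕜] [NormedAddCommGroup E]
    [InnerProductSpace 𝕜 E] {u : ℕ → E} {C : ℝ} (hC : ∀ n, ‖u n‖ ≤ C)
    (hu : ∀ n m, n ≤ m → inner 𝕜 (u n) (u m) = inner 𝕜 (u n) (u n)) : CauchySeq u := by
  -- the increments `u m - u n` are orthogonal to `u n`, so `‖u n‖²` increases to a limit
  have hsub : ∀ n m, n ≤ m → ‖u m - u n‖ ^ 2 = ‖u m‖ ^ 2 - ‖u n‖ ^ 2 := by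
    intro n m hnm
    have hre : RCLike.re (inner 𝕜 (u m) (u n)) = ‖u n‖ ^ 2 := by
      rw [← inner_conj_symm, RCLike.conj_re, hu n m hnm, inner_self_eq_norm_sq]
    rw [@norm_sub_sq 𝕜, hre]
    ring
  set c : ℕ → ℝ := fun n => ‖u n‖ ^ 2
  have hmono : Monotone c := fun n m hnm => by
    have := hsub n m hnm
    nlinarith [sq_nonneg ‖u m - u n‖]
  have hbdd : BddAbove (Set.range c) :=
    ⟨C ^ 2, by rintro _ ⟨n, rfl⟩; exact pow_le_pow_left₀ (norm_nonneg _) (hC n) 2⟩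
  have hc : CauchySeq c := (tendsto_atTop_ciSup hmono hbdd).cauchySeq
  rw [Metric.cauchySeq_iff] at hc ⊢
  intro ε hε
  obtain ⟨N, hN⟩ := hc (ε ^ 2) (by positivity)
  refine ⟨N, fun m hm n hn => ?_⟩
  have hdist : dist (u m) (u n) ^ 2 = dist (c m) (c n) := by
    rcases le_total n m with hnm | hmn
    · rw [dist_eq_norm, hsub n m hnm, Real.dist_eq, abs_of_nonneg (sub_nonneg.2 (hmono hnm))]
    · rw [dist_comm, dist_eq_norm, hsub m n hmn, Real.dist_eq, abs_sub_comm,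
        abs_of_nonneg (sub_nonneg.2 (hmono hmn))]
  exact lt_of_pow_lt_pow_left₀ 2 hε.le (hdist ▸ hN m hm n hn)

variable {𝕜 : Type*} [NontriviallyNormedField 𝕜]

theorem cauchySeq_apply_of_dense {E F : Type*}
    [SeminormedAddCommGroup E] [NormedSpace 𝕜 E] [SeminormedAddCommGroup F] [NormedSpace 𝕜 F]
    {T : ℕ → E →L[𝕜] F} {C : ℝ} (hT : ∀ n, ‖T n‖ ≤ C) {s : Set E} (hs : Dense s)
    (h : ∀ y ∈ s, CauchySeq fun n => T n y) (x : E) : CauchySeq fun n => T n x := by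
  rw [Metric.cauchySeq_iff]
  intro ε hε
  have hC : 0 ≤ C := (norm_nonneg _).trans (hT 0)
  obtain ⟨y, hys, hxy⟩ := hs.exists_dist_lt x (show 0 < ε / 3 / (C + 1) by positivity)
  obtain ⟨N, hN⟩ := Metric.cauchySeq_iff.1 (h y hys) (ε / 3) (by positivity)
  have hclose : ∀ n, dist (T n x) (T n y) < ε / 3 := fun n =>
    calc dist (T n x) (T n y) ≤ (C + 1) * dist x y :=
          ((T n).dist_le_opNorm x y).trans (by gcongr; linarith [hT n])
      _ < (C + 1) * (ε / 3 / (C + 1)) := by gcongr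
      _ = ε / 3 := by field_simp
  refine ⟨N, fun m hm n hn => ?_⟩
  calc dist (T m x) (T n x)
      ≤ dist (T m x) (T m y) + dist (T m y) (T n y) + dist (T n y) (T n x) :=
        dist_triangle4 _ _ _ _
    _ < ε / 3 + ε / 3 + ε / 3 := by
        gcongr
        · exact hclose m
        · exact hN m hm n hn
        · exact dist_comm (T n y) (T n x) ▸ hclose n
    _ = ε := by ring

theorem exists_tendsto_apply_of_dense_span {E F : Type*}
    [NormedAddCommGroup E] [NormedSpace 𝕜 E] [CompleteSpace E]
    [NormedAddCommGroup F] [NormedSpace 𝕜 F] [CompleteSpace F]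
    {T : ℕ → E →L[𝕜] F} {C : ℝ} (hT : ∀ n, ‖T n‖ ≤ C) {s : Set E}
    (hs : Dense (Submodule.span 𝕜 s : Set E))
    (h : ∀ y ∈ s, ∃ L, Tendsto (fun n => T n y) atTop (𝓝 L)) :
    ∃ X : E →L[𝕜] F, ∀ x, Tendsto (fun n => T n x) atTop (𝓝 (X x)) := by
  have hspan : ∀ y ∈ Submodule.span 𝕜 s, ∃ L, Tendsto (fun n => T n y) atTop (𝓝 L) := by
    intro y hy
    induction hy using Submodule.span_induction with
    | mem y hy => exact h y hy
    | zero => exact ⟨0, by simp⟩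
    | add y z _ _ hy hz =>
      obtain ⟨Ly, hLy⟩ := hy
      obtain ⟨Lz, hLz⟩ := hz
      exact ⟨Ly + Lz, by simpa only [map_add] using hLy.add hLz⟩
    | smul a y _ hy =>
      obtain ⟨L, hL⟩ := hy
      exact ⟨a • L, by simpa only [map_smul] using hL.const_smul a⟩
  have hlim : ∀ x, ∃ L, Tendsto (fun n => T n x) atTop (𝓝 L) := fun x =>
    cauchySeq_tendsto_of_complete <| cauchySeq_apply_of_dense hT hs
      (fun y hy => (hspan y hy).choose_spec.cauchySeq) x
  choose f hf using hlim
  exact ⟨continuousLinearMapOfTendsto T (tendsto_pi_nhds.2 hf), hf⟩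

end Convergence

/-- `B_τ(K)` is the fixed-point set of `tau v`. -/
def tau {d : ℕ} {E : Type*} [NormedAddCommGroup E] [InnerProductSpace ℂ E] [CompleteSpace E]
    (W : Fin d → E →L[ℂ] E) (Y : E →L[ℂ] E) : E →L[ℂ] E :=
  ∑ k, W k ∘L Y ∘L adjoint (W k)

section Tau

variable {d : ℕ} {E : Type*} [NormedAddCommGroup E] [InnerProductSpace ℂ E] [CompleteSpace E]

theorem tau_eq_self_of_commute_adjoint {W : Fin d → E →L[ℂ] E}
    (hW : ∑ k, W k ∘L adjoint (W k) = 1) {Y : E →L[ℂ] E}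
    (hY : ∀ k, adjoint (W k) ∘L Y = Y ∘L adjoint (W k)) : tau W Y = Y := by
  calc tau W Y = ∑ k, W k ∘L adjoint (W k) ∘L Y := by simp only [tau, hY]
    _ = Y := by simp only [← comp_assoc, ← finsetSum_comp, hW]; rfl

theorem adjoint_tau (W : Fin d → E →L[ℂ] E) (Y : E →L[ℂ] E) :
    adjoint (tau W Y) = tau W (adjoint Y) := by
  simp only [tau, map_sum, adjoint_comp, adjoint_adjoint, comp_assoc]

variable {S : Fin d → E →L[ℂ] E}

theorem IsCuntzFamily.adjoint_comp_comp {F : Type*} [NormedAddCommGroup F] [InnerProductSpace ℂ F]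
    (hS : IsCuntzFamily S) (i j : Fin d) (Z : F →L[ℂ] E) :
    adjoint (S i) ∘L S j ∘L Z = if i = j then Z else 0 := by
  rw [← comp_assoc, hS.1]
  split_ifs <;> rfl

theorem IsCuntzFamily.tau_mul (hS : IsCuntzFamily S) (A B : E →L[ℂ] E) :
    tau S (A * B) = tau S A * tau S B := by
  simp only [tau, mul_def, comp_assoc, comp_finsetSum, finsetSum_comp, hS.adjoint_comp_comp,
    comp_ite, comp_zero, Finset.sum_ite_eq', Finset.mem_univ, if_true]

def IsCuntzFamily.tauStarAlgHom (hS : IsCuntzFamily S) : (E →L[ℂ] E) →⋆ₐ[ℂ] (E →L[ℂ] E) where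
  toFun := tau S
  map_one' := hS.2
  map_mul' := hS.tau_mul
  map_zero' := by simp [tau]
  map_add' A B := by simp [tau, add_comp, comp_add, Finset.sum_add_distrib]
  commutes' r := by
    simp only [Algebra.algebraMap_eq_smul_one, tau, smul_comp, comp_smul, ← Finset.smul_sum]
    exact congrArg (r • ·) hS.2
  map_star' A := by simp only [star_eq_adjoint, adjoint_tau]

theorem IsCuntzFamily.norm_iterate_tau_le (hS : IsCuntzFamily S) (Y : E →L[ℂ] E) (n : ℕ) :
    ‖(tau S)^[n] Y‖ ≤ ‖Y‖ := by
  induction n with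
  | zero => rfl
  | succ n ih =>
    rw [Function.iterate_succ_apply']
    exact (NonUnitalStarAlgHom.norm_apply_le hS.tauStarAlgHom _).trans ih

theorem IsCuntzFamily.tau_comp (hS : IsCuntzFamily S) (Y : E →L[ℂ] E) (k : Fin d) :
    tau S Y ∘L S k = S k ∘L Y := by
  simp only [tau, finsetSum_comp, comp_assoc, hS.1, comp_ite, comp_zero, Finset.sum_ite_eq',
    Finset.mem_univ, if_true]
  rfl

theorem IsCuntzFamily.adjoint_comp_tau (hS : IsCuntzFamily S) (Y : E →L[ℂ] E) (k : Fin d) :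
    adjoint (S k) ∘L tau S Y = Y ∘L adjoint (S k) := by
  simp only [tau, comp_finsetSum, hS.adjoint_comp_comp, Finset.sum_ite_eq, Finset.mem_univ,
    if_true]

theorem IsCuntzFamily.inner_tau_apply_tau_apply (hS : IsCuntzFamily S) (A B : E →L[ℂ] E)
    (x y : E) :
    ⟪tau S A x, tau S B y⟫ = ∑ k, ⟪A (adjoint (S k) x), B (adjoint (S k) y)⟫ := by
  calc ⟪tau S A x, tau S B y⟫ = ⟪x, tau S (adjoint A * B) y⟫ := by
        rw [hS.tau_mul, ← adjoint_tau, mul_apply_eq_comp, adjoint_inner_right]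
    _ = ∑ k, ⟪A (adjoint (S k) x), B (adjoint (S k) y)⟫ := by
        simp only [tau, sum_apply, comp_apply, mul_apply_eq_comp, inner_sum]
        exact Finset.sum_congr rfl fun k _ => by rw [← adjoint_inner_left, adjoint_inner_right]

theorem IsCuntzFamily.iterate_tau_comp_cword (hS : IsCuntzFamily S) (Y : E →L[ℂ] E)
    (I : List (Fin d)) : (tau S)^[I.length] Y ∘L cword S I = cword S I ∘L Y := by
  induction I with
  | nil => rfl
  | cons i I ih =>
    rw [List.length_cons, Function.iterate_succ_apply', cword_cons, ← comp_assoc, hS.tau_comp,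
      comp_assoc, ih, comp_assoc]

end Tau

section Compression

variable {d : ℕ} {K H : Type*}
  [NormedAddCommGroup K] [InnerProductSpace ℂ K] [CompleteSpace K]
  [NormedAddCommGroup H] [InnerProductSpace ℂ H] [CompleteSpace H]
  {v : Fin d → K →L[ℂ] K} {ι : K →L[ℂ] H} {S : Fin d → H →L[ℂ] H}

theorem adjoint_comp_tau_comp (hι : ∀ k, adjoint ι ∘L S k = v k ∘L adjoint ι) (Y : H →L[ℂ] H) :
    adjoint ι ∘L tau S Y ∘L ι = tau v (adjoint ι ∘L Y ∘L ι) := by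
  have hι' : ∀ k, adjoint (S k) ∘L ι = ι ∘L adjoint (v k) := fun k => by
    simpa only [adjoint_comp, adjoint_adjoint] using congrArg adjoint (hι k)
  simp only [tau, comp_finsetSum, finsetSum_comp, comp_assoc, hι']
  simp only [← comp_assoc, hι]

theorem adjoint_comp_cword_comp (hiso : adjoint ι ∘L ι = 1)
    (hι : ∀ k, adjoint ι ∘L S k = v k ∘L adjoint ι) (I : List (Fin d)) :
    adjoint ι ∘L cword S I ∘L ι = cword v I := by
  rw [← comp_assoc, comp_cword_of_comp_eq hι, comp_assoc, hiso]
  rfl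

theorem adjoint_comp_comp_commute_of_commute_proj (hiso : adjoint ι ∘L ι = 1)
    {X T : H →L[ℂ] H} (hXP : X ∘L (ι ∘L adjoint ι) = (ι ∘L adjoint ι) ∘L X)
    (hXT : T ∘L X = X ∘L T) :
    (adjoint ι ∘L T ∘L ι) ∘L (adjoint ι ∘L X ∘L ι)
      = (adjoint ι ∘L X ∘L ι) ∘L (adjoint ι ∘L T ∘L ι) := by
  have hXι : X ∘L ι = ι ∘L adjoint ι ∘L X ∘L ι :=
    calc X ∘L ι = X ∘L ι ∘L adjoint ι ∘L ι := by rw [hiso]; rfl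
      _ = ι ∘L adjoint ι ∘L X ∘L ι := by simp only [← comp_assoc] at hXP ⊢; rw [hXP]
  have hιX : adjoint ι ∘L X = adjoint ι ∘L X ∘L ι ∘L adjoint ι :=
    calc adjoint ι ∘L X = adjoint ι ∘L ι ∘L adjoint ι ∘L X := by rw [← comp_assoc, hiso]; rfl
      _ = adjoint ι ∘L X ∘L ι ∘L adjoint ι := by rw [← comp_assoc ι, ← hXP]
  calc (adjoint ι ∘L T ∘L ι) ∘L (adjoint ι ∘L X ∘L ι)
      = adjoint ι ∘L T ∘L ι ∘L adjoint ι ∘L X ∘L ι := by simp only [comp_assoc]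
    _ = adjoint ι ∘L (X ∘L T) ∘L ι := by rw [← hXι, ← hXT]; simp only [comp_assoc]
    _ = (adjoint ι ∘L X ∘L ι) ∘L (adjoint ι ∘L T ∘L ι) := by
        rw [← comp_assoc, ← comp_assoc, hιX]; simp only [comp_assoc]

theorem ext_of_adjoint_comp_comp {α : Type*} {w : α → K →L[ℂ] H}
    (hw : Dense (Submodule.span ℂ {h | ∃ a ξ, h = w a ξ} : Set H)) {A B : H →L[ℂ] H}
    (h : ∀ a b, adjoint (w a) ∘L A ∘L w b = adjoint (w a) ∘L B ∘L w b) : A = B := by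
  have hgen : ∀ b η, A (w b η) = B (w b η) := by
    intro b η
    have hinner : innerSL ℂ (A (w b η)) = innerSL ℂ (B (w b η)) := by
      refine ext_on hw ?_
      rintro _ ⟨a, ξ, rfl⟩
      simp only [innerSL_apply_apply]
      rw [← inner_conj_symm, ← inner_conj_symm (B _), ← adjoint_inner_right,
        ← adjoint_inner_right]
      exact congrArg (fun C : K →L[ℂ] K => starRingEnd ℂ ⟪ξ, C η⟫) (h a b)
    exact ext_inner_right ℂ fun y => congrArg (· y) hinner
  exact ext_on hw (by rintro _ ⟨b, η, rfl⟩; exact hgen b η)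

end Compression

section Dilation

variable {d : ℕ} {K H : Type*}
  [NormedAddCommGroup K] [InnerProductSpace ℂ K] [CompleteSpace K]
  [NormedAddCommGroup H] [InnerProductSpace ℂ H] [CompleteSpace H]
  {v : Fin d → K →L[ℂ] K} {ι : K →L[ℂ] H} {S : Fin d → H →L[ℂ] H}

theorem IsMinimalDilation.adjoint_iota_comp (hdil : IsMinimalDilation v ι S) (k : Fin d) :
    adjoint ι ∘L S k = v k ∘L adjoint ι := by
  obtain ⟨-, hiso, hinv, hcomp, -⟩ := hdil
  have h := congrArg adjoint (hinv k)
  simp only [adjoint_comp, adjoint_adjoint, comp_assoc] at h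
  calc adjoint ι ∘L S k = adjoint ι ∘L ι ∘L adjoint ι ∘L S k := by
        rw [← comp_assoc, hiso]; rfl
    _ = (adjoint ι ∘L S k ∘L ι) ∘L adjoint ι := by rw [← h]; simp only [← comp_assoc, hiso]; rfl
    _ = v k ∘L adjoint ι := by rw [hcomp]

theorem IsMinimalDilation.adjoint_comp_iota (hdil : IsMinimalDilation v ι S) (k : Fin d) :
    adjoint (S k) ∘L ι = ι ∘L adjoint (v k) := by
  simpa only [adjoint_comp, adjoint_adjoint] using congrArg adjoint (hdil.adjoint_iota_comp k)

theorem IsMinimalDilation.commute_proj_of_compress_mem_centralizer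
    (hdil : IsMinimalDilation v ι S) {Y : H →L[ℂ] H}
    (hY : Y ∈ Set.centralizer (Set.range S ∪ Set.range fun k => adjoint (S k)))
    (hx : adjoint ι ∘L Y ∘L ι ∈ Set.centralizer (Set.range v ∪ Set.range fun k => adjoint (v k))) :
    Y * (ι ∘L adjoint ι) = (ι ∘L adjoint ι) * Y := by
  have hι := hdil.adjoint_iota_comp
  have hι' := hdil.adjoint_comp_iota
  obtain ⟨-, hiso, -, -, hdense⟩ := hdil
  rw [mem_centralizer_range_union_range_iff] at hY hx
  refine ext_of_adjoint_comp_comp (w := fun I => cword S I ∘L ι) hdense fun I J => ?_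
  have hYJ : Y ∘L cword S J = cword S J ∘L Y := comp_cword_of_comp_eq (fun k => (hY k).1.symm) J
  have hYI : Y ∘L adjoint (cword S I) = adjoint (cword S I) ∘L Y :=
    comp_adjoint_cword_of_comp_eq (fun k => (hY k).2.symm) I
  have hxJ := comp_cword_of_comp_eq (fun k => (hx k).1.symm) J
  have hxI := comp_adjoint_cword_of_comp_eq (fun k => (hx k).2.symm) I
  have hιI : ι ∘L adjoint (cword v I) = adjoint (cword S I) ∘L ι :=
    comp_adjoint_cword_of_comp_eq (fun k => (hι' k).symm) I
  have hleft : adjoint (cword S I ∘L ι) ∘L Y ∘L ι = (adjoint ι ∘L Y ∘L ι) ∘L adjoint (cword v I) :=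
    calc adjoint (cword S I ∘L ι) ∘L Y ∘L ι = adjoint ι ∘L (adjoint (cword S I) ∘L Y) ∘L ι := by
          rw [adjoint_comp]; simp only [comp_assoc]
      _ = (adjoint ι ∘L Y ∘L ι) ∘L adjoint (cword v I) := by
          rw [← hYI, comp_assoc, ← hιI]; simp only [comp_assoc]
  have hright : adjoint ι ∘L Y ∘L cword S J ∘L ι = cword v J ∘L (adjoint ι ∘L Y ∘L ι) :=
    calc adjoint ι ∘L Y ∘L cword S J ∘L ι = (adjoint ι ∘L cword S J) ∘L Y ∘L ι := by
          rw [← comp_assoc Y, hYJ]; simp only [comp_assoc]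
      _ = cword v J ∘L (adjoint ι ∘L Y ∘L ι) := by
          rw [comp_cword_of_comp_eq hι]; simp only [comp_assoc]
  have hcompI : adjoint (cword S I ∘L ι) ∘L ι = adjoint (cword v I) := by
    rw [← adjoint_comp_cword_comp hiso hι I]; simp only [adjoint_comp, adjoint_adjoint, comp_assoc]
  calc adjoint (cword S I ∘L ι) ∘L (Y * (ι ∘L adjoint ι)) ∘L cword S J ∘L ι
      = (adjoint (cword S I ∘L ι) ∘L Y ∘L ι) ∘L (adjoint ι ∘L cword S J ∘L ι) := by
        simp only [mul_def, comp_assoc]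
    _ = adjoint (cword v I) ∘L cword v J ∘L (adjoint ι ∘L Y ∘L ι) := by
        rw [hleft, adjoint_comp_cword_comp hiso hι, hxI, comp_assoc, hxJ]
    _ = (adjoint (cword S I ∘L ι) ∘L ι) ∘L (adjoint ι ∘L Y ∘L cword S J ∘L ι) := by
        rw [hcompI, hright]
    _ = adjoint (cword S I ∘L ι) ∘L ((ι ∘L adjoint ι) * Y) ∘L cword S J ∘L ι := by
        simp only [mul_def, comp_assoc]

end Dilation

section Lift

variable {d : ℕ} {K H : Type*}
  [NormedAddCommGroup K] [InnerProductSpace ℂ K] [CompleteSpace K]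
  [NormedAddCommGroup H] [InnerProductSpace ℂ H] [CompleteSpace H]
  {v : Fin d → K →L[ℂ] K} {ι : K →L[ℂ] H} {S : Fin d → H →L[ℂ] H} {x : K →L[ℂ] K}

/-- For a `τ_v`-fixed point `x`, these converge strongly to an operator in `{Sₖ, Sₖ*}'` whose
compression is `x`. -/
def liftApprox (ι : K →L[ℂ] H) (S : Fin d → H →L[ℂ] H) (x : K →L[ℂ] K) (n : ℕ) : H →L[ℂ] H :=
  (tau S)^[n] (ι ∘L x ∘L adjoint ι)

theorem liftApprox_succ (n : ℕ) : liftApprox ι S x (n + 1) = tau S (liftApprox ι S x n) :=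
  Function.iterate_succ_apply' _ _ _

theorem adjoint_comp_liftApprox_comp (hiso : adjoint ι ∘L ι = 1)
    (hι : ∀ k, adjoint ι ∘L S k = v k ∘L adjoint ι) (hx : tau v x = x) (n : ℕ) :
    adjoint ι ∘L liftApprox ι S x n ∘L ι = x := by
  induction n with
  | zero =>
    simp only [liftApprox, Function.iterate_zero, id, comp_assoc]
    rw [hiso, ← comp_assoc, hiso]
    rfl
  | succ n ih => rw [liftApprox_succ, adjoint_comp_tau_comp hι, ih, hx]

theorem inner_liftApprox_apply_of_le (hS : IsCuntzFamily S) (hiso : adjoint ι ∘L ι = 1)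
    (hι : ∀ k, adjoint ι ∘L S k = v k ∘L adjoint ι) (hx : tau v x = x) {n m : ℕ} (hnm : n ≤ m)
    (ξ : K) :
    ⟪liftApprox ι S x n (ι ξ), liftApprox ι S x m (ι ξ)⟫
      = ⟪liftApprox ι S x n (ι ξ), liftApprox ι S x n (ι ξ)⟫ := by
  induction n generalizing m ξ with
  | zero =>
    have h0 : ∀ m, ⟪liftApprox ι S x 0 (ι ξ), liftApprox ι S x m (ι ξ)⟫ = ⟪x ξ, x ξ⟫ := by
      intro m
      have hξ : adjoint ι (liftApprox ι S x m (ι ξ)) = x ξ :=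
        congrArg (· ξ) (adjoint_comp_liftApprox_comp hiso hι hx m)
      have hιξ : adjoint ι (ι ξ) = ξ := congrArg (· ξ) hiso
      simp only [liftApprox, Function.iterate_zero, id, comp_apply, hιξ]
      rw [← adjoint_inner_right, ← liftApprox, hξ]
    rw [h0, h0]
  | succ n ih =>
    obtain ⟨m, rfl⟩ : ∃ m', m = m' + 1 := ⟨m - 1, by omega⟩
    have hι' : ∀ k, adjoint (S k) (ι ξ) = ι (adjoint (v k) ξ) := fun k => by
      simpa only [adjoint_comp, adjoint_adjoint, comp_apply] using
        congrArg (fun A => adjoint A ξ) (hι k)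
    simp only [liftApprox_succ, hS.inner_tau_apply_tau_apply, hι']
    exact Finset.sum_congr rfl fun k _ => ih (by omega) _

theorem cauchySeq_liftApprox_apply (hS : IsCuntzFamily S) (hiso : adjoint ι ∘L ι = 1)
    (hι : ∀ k, adjoint ι ∘L S k = v k ∘L adjoint ι) (hx : tau v x = x) (ξ : K) :
    CauchySeq fun n => liftApprox ι S x n (ι ξ) :=
  cauchySeq_of_inner_eq_inner_self (𝕜 := ℂ) (C := ‖ι ∘L x ∘L adjoint ι‖ * ‖ι ξ‖)
    (fun n => ((liftApprox ι S x n).le_opNorm _).trans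
      (by gcongr; exact hS.norm_iterate_tau_le _ n))
    (fun _ _ hnm => inner_liftApprox_apply_of_le hS hiso hι hx hnm ξ)

theorem IsMinimalDilation.exists_tendsto_liftApprox (hdil : IsMinimalDilation v ι S)
    (hx : tau v x = x) :
    ∃ X : H →L[ℂ] H, ∀ h, Tendsto (fun n => liftApprox ι S x n h) atTop (𝓝 (X h)) := by
  have hι := hdil.adjoint_iota_comp
  obtain ⟨hS, hiso, -, -, hdense⟩ := hdil
  refine exists_tendsto_apply_of_dense_span (fun n => hS.norm_iterate_tau_le _ n) hdense ?_
  rintro _ ⟨I, ξ, rfl⟩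
  obtain ⟨L, hL⟩ := cauchySeq_tendsto_of_complete (cauchySeq_liftApprox_apply hS hiso hι hx ξ)
  refine ⟨cword S I L, (tendsto_add_atTop_iff_nat I.length).1 ?_⟩
  have hshift : ∀ n, liftApprox ι S x (n + I.length) (cword S I (ι ξ))
      = cword S I (liftApprox ι S x n (ι ξ)) := fun n => by
    rw [liftApprox, add_comm, Function.iterate_add_apply]
    exact congrArg (· (ι ξ)) (hS.iterate_tau_comp_cword _ I)
  simpa only [hshift, Function.comp_def] using ((cword S I).continuous.tendsto L).comp hL

theorem IsMinimalDilation.exists_mem_centralizer_compress_eq (hdil : IsMinimalDilation v ι S)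
    (hx : tau v x = x) :
    ∃ X ∈ Set.centralizer (Set.range S ∪ Set.range fun k => adjoint (S k)),
      adjoint ι ∘L X ∘L ι = x := by
  obtain ⟨X, hX⟩ := hdil.exists_tendsto_liftApprox hx
  have hι := hdil.adjoint_iota_comp
  obtain ⟨hS, hiso, -, -, -⟩ := hdil
  have hX' : ∀ h, Tendsto (fun n => liftApprox ι S x (n + 1) h) atTop (𝓝 (X h)) :=
    fun h => (tendsto_add_atTop_iff_nat 1).2 (hX h)
  have hS_comm : ∀ k h, S k (X h) = X (S k h) := fun k h => by
    have hstep : ∀ n, S k (liftApprox ι S x n h) = liftApprox ι S x (n + 1) (S k h) := fun n => by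
      rw [liftApprox_succ]; exact congrArg (· h) (hS.tau_comp (liftApprox ι S x n) k).symm
    refine tendsto_nhds_unique (((S k).continuous.tendsto _).comp (hX h)) ?_
    simpa only [Function.comp_def, hstep] using hX' (S k h)
  have hadjS_comm : ∀ k h, adjoint (S k) (X h) = X (adjoint (S k) h) := fun k h => by
    have hstep : ∀ n, adjoint (S k) (liftApprox ι S x (n + 1) h)
        = liftApprox ι S x n (adjoint (S k) h) := fun n => by
      rw [liftApprox_succ]; exact congrArg (· h) (hS.adjoint_comp_tau (liftApprox ι S x n) k)
    refine tendsto_nhds_unique (((adjoint (S k)).continuous.tendsto _).comp (hX' h)) ?_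
    simpa only [Function.comp_def, hstep] using hX (adjoint (S k) h)
  have hcompress : ∀ ξ, adjoint ι (X (ι ξ)) = x ξ := fun ξ => by
    refine tendsto_nhds_unique (((adjoint ι).continuous.tendsto _).comp (hX (ι ξ))) ?_
    have hconst : ∀ n, adjoint ι (liftApprox ι S x n (ι ξ)) = x ξ := fun n =>
      congrArg (· ξ) (adjoint_comp_liftApprox_comp hiso hι hx n)
    simpa only [Function.comp_def, hconst] using tendsto_const_nhds
  exact ⟨X, mem_centralizer_range_union_range_iff.2 fun k =>
    ⟨ext (hS_comm k), ext (hadjS_comm k)⟩, ext hcompress⟩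

end Lift

theorem commutant_eq_fixedPoints_iff_proj_mem_general {d : ℕ}
    {K H : Type*} [NormedAddCommGroup K] [InnerProductSpace ℂ K] [CompleteSpace K]
    [NormedAddCommGroup H] [InnerProductSpace ℂ H] [CompleteSpace H]
    (v : Fin d → K →L[ℂ] K) (hv : IsPopescuSystem v)
    (ι : K →L[ℂ] H) (S : Fin d → H →L[ℂ] H) (hdil : IsMinimalDilation v ι S) :
    Set.centralizer (Set.range v ∪ Set.range (fun k => adjoint (v k)))
        ⊆ {x : K →L[ℂ] K | (∑ k : Fin d, v k ∘L x ∘L adjoint (v k)) = x} ∧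
    (Set.centralizer (Set.range v ∪ Set.range (fun k => adjoint (v k)))
          = {x : K →L[ℂ] K | (∑ k : Fin d, v k ∘L x ∘L adjoint (v k)) = x} ↔
      (ι ∘L adjoint ι) ∈ Set.centralizer (Set.centralizer
          (Set.range S ∪ Set.range (fun k => adjoint (S k))))) := by
  have hsub : Set.centralizer (Set.range v ∪ Set.range (fun k => adjoint (v k)))
      ⊆ {x | tau v x = x} := fun x hx =>
    tau_eq_self_of_commute_adjoint hv fun k => (mem_centralizer_range_union_range_iff.1 hx k).2
  refine ⟨hsub, fun heq => Set.mem_centralizer_iff.2 fun Y hY => ?_,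
    fun hP => hsub.antisymm fun x hx => ?_⟩
  · refine hdil.commute_proj_of_compress_mem_centralizer hY (heq ▸ ?_)
    show tau v _ = _
    rw [← adjoint_comp_tau_comp hdil.adjoint_iota_comp, tau_eq_self_of_commute_adjoint hdil.1.2
      fun k => (mem_centralizer_range_union_range_iff.1 hY k).2]
  · obtain ⟨X, hX, rfl⟩ := hdil.exists_mem_centralizer_compress_eq hx
    have hXP := Set.mem_centralizer_iff.1 hP X hX
    rw [mem_centralizer_range_union_range_iff] at hX ⊢
    intro k
    have hvk : v k = adjoint ι ∘L S k ∘L ι := (hdil.2.2.2.1 k).symm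
    have hvk' : adjoint (v k) = adjoint ι ∘L adjoint (S k) ∘L ι := by
      rw [hvk]; simp only [adjoint_comp, adjoint_adjoint, comp_assoc]
    rw [hvk', hvk]
    exact ⟨adjoint_comp_comp_commute_of_commute_proj hdil.2.1 hXP (hX k).1,
      adjoint_comp_comp_commute_of_commute_proj hdil.2.1 hXP (hX k).2⟩

/-- In a minimal Popescu dilation `(H, P, S)` of `(K, v)` (`P = ι ∘ ι*`):
`{vₖ, vₖ*}' ⊆ B_τ(K) = {x : ∑ₖ vₖ x vₖ* = x}`, and equality holds iff `P` belongs to the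
von Neumann algebra `{Sₖ, Sₖ*}''` generated by the Cuntz family. -/
theorem commutant_eq_fixedPoints_iff_proj_mem {d : ℕ} (hd : 2 ≤ d)
    {K H : Type*} [NormedAddCommGroup K] [InnerProductSpace ℂ K] [CompleteSpace K]
    [NormedAddCommGroup H] [InnerProductSpace ℂ H] [CompleteSpace H]
    (v : Fin d → K →L[ℂ] K) (hv : IsPopescuSystem v)
    (ι : K →L[ℂ] H) (S : Fin d → H →L[ℂ] H) (hdil : IsMinimalDilation v ι S) :
    Set.centralizer (Set.range v ∪ Set.range (fun k => adjoint (v k)))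
        ⊆ {x : K →L[ℂ] K | (∑ k : Fin d, v k ∘L x ∘L adjoint (v k)) = x} ∧
    (Set.centralizer (Set.range v ∪ Set.range (fun k => adjoint (v k)))
          = {x : K →L[ℂ] K | (∑ k : Fin d, v k ∘L x ∘L adjoint (v k)) = x} ↔
      (ι ∘L adjoint ι) ∈ Set.centralizer (Set.centralizer
          (Set.range S ∪ Set.range (fun k => adjoint (S k))))) :=
  commutant_eq_fixedPoints_iff_proj_mem_general v hv ι S hdil
end
end

section
/- Fix d ≥ 2 and let 𝓘 be the set of finite multi-indices over {1,…,d}, including the empty multi-index ∅. Suppose C : 𝓘 × 𝓘 → ℂ satisfies: (i) C(∅,∅) = 1; (ii) for every finitely supported function λ : 𝓘 → ℂ, Σ_{I,J ∈ 𝓘} conj(λ(I)) C(I,J) λ(J) ≥ 0; (iii) Σ_{i=1}^d C(Ii, Ji) = C(I,J) for all I, J ∈ 𝓘, where Ii denotes the multi-index I with the letter i appended. Then there exist a complex Hilbert space K, a unit vector Ω ∈ K, and a Popescu system (v_1,…,v_d) on K such that the vectors {v_I* Ω : I ∈ 𝓘} are total in K and C(I,J) = ⟨v_I* Ω, v_J*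 Ω⟩ for all I, J ∈ 𝓘; moreover (K, Ω, (v_k)) is unique up to a unitary equivalence carrying Ω to Ω and each v_k to v_k. -/
/-!
By positive definiteness, `C` is the Gram matrix of a total family `(ξ_I)` in a Hilbert space `K`
(Moore's theorem, `RKHS.OfKernel`). The consistency relation says that `ξ_I ↦ (ξ_{Ik})_k` preserves
Gram matrices, so it extends to an isometry `W : K → ⨁_k K`. Its components `w_k` satisfy
`∑ w_k* w_k = W* W = 1`, hence `v_k := w_k*` is a Popescu system with `v_k* ξ_I = ξ_{Ik}`, so
`v_I* ξ_∅ = ξ_I`. For uniqueness, two total families with the same Gram matrix are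
related by a unitary; it intertwines the `v_k*` on the total family, hence the `v_k`.
-/

open ContinuousLinearMap Filter
open scoped ComplexInnerProductSpace ComplexOrder

noncomputable section

open Finsupp Matrix Submodule Set
open scoped InnerProductSpace

universe u

theorem Matrix.posSemidef_of_forall_finsuppSum_nonneg {n : Type*} {M : Matrix n n ℂ}
    (hM : ∀ x : n →₀ ℂ, 0 ≤ x.sum fun i xi ↦ x.sum fun j xj ↦ star xi * M i j * xj) :
    M.PosSemidef := by
  refine ⟨?_, hM⟩
  ext i j
  -- polarization: the form is real at `eᵢ + b eⱼ` for `b = 0, 1, I`, and at `eⱼ`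
  have im_zero (a b : ℂ) :
      (star a * M i i * a + star a * M i j * b + star b * M j i * a + star b * M j j * b).im
        = 0 := by
    have hsum : ((Finsupp.single i a + .single j b).sum fun k xk ↦
        (Finsupp.single i a + .single j b).sum fun l xl ↦ star xk * M k l * xl) =
        star a * M i i * a + star a * M i j * b + star b * M j i * a + star b * M j j * b := by
      simp only [RCLike.star_def, mul_zero, implies_true, mul_add, sum_add_index',
        sum_single_index, sum_add, map_zero, zero_mul, map_add, add_mul]
      ring
    rw [← hsum, ← (Complex.nonneg_iff.1 (hM _)).2]
  have hii := im_zero 1 0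
  have hjj := im_zero 0 1
  have h₁ := im_zero 1 1
  have h₂ := im_zero 1 Complex.I
  simp only [star_one, one_mul, mul_one, mul_zero, add_zero, star_zero, zero_mul, zero_add,
    Complex.add_im, RCLike.star_def, Complex.conj_I, neg_mul, Complex.mul_im, Complex.I_im,
    Complex.I_re, Complex.neg_im, Complex.mul_re, zero_sub, neg_neg] at hii hjj h₁ h₂
  apply Complex.ext <;>
    simp only [conjTranspose_apply, RCLike.star_def, Complex.conj_re, Complex.conj_im] <;> linarith

theorem Matrix.PosSemidef.map_algebraMap {X : Type*} {C : Matrix X X ℂ} (hC : C.PosSemidef) :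
    (C.map (algebraMap ℂ (ℂ →L[ℂ] ℂ))).PosSemidef := by
  apply ((RKHS.posSemidef_tfae (K := C.map (algebraMap ℂ (ℂ →L[ℂ] ℂ)))).out 2 0).1
  refine ⟨hC.1.map _ fun z ↦ algebraMap_star_comm z, fun x ↦ ?_⟩
  rw [RCLike.re_to_complex]
  convert (Complex.nonneg_iff.1 (hC.2 x)).1 using 2
  refine Finsupp.sum_congr fun i _ ↦ Finsupp.sum_congr fun j _ ↦ ?_
  simp only [map_apply, ContinuousLinearMap.algebraMap_apply, smul_eq_mul, RCLike.inner_apply,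
    map_mul, RCLike.star_def, ← hC.1.apply i j]
  ring

-- Mathlib's RKHS construction takes operator-valued kernels; `C` is viewed as one with values in
-- `ℂ →L[ℂ] ℂ`.
theorem Matrix.PosSemidef.exists_dense_span_gram_eq {X : Type u} {C : Matrix X X ℂ}
    (hC : C.PosSemidef) :
    ∃ (K : Type u) (_ : NormedAddCommGroup K) (_ : InnerProductSpace ℂ K) (_ : CompleteSpace K)
      (ξ : X → K), Dense (span ℂ (range ξ) : Set K) ∧ gram ℂ ξ = C := by
  have : Fact (C.map (algebraMap ℂ (ℂ →L[ℂ] ℂ))).PosSemidef := ⟨hC.map_algebraMap⟩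
  let H := RKHS.OfKernel (C.map (algebraMap ℂ (ℂ →L[ℂ] ℂ)))
  refine ⟨H, inferInstance, inferInstance, inferInstance, fun x ↦ RKHS.kerFun H x 1, ?_, ?_⟩
  · have hspan : span ℂ (range fun x ↦ RKHS.kerFun H x 1) =
        span ℂ {y | ∃ x v, RKHS.kerFun H x v = y} := by
      refine le_antisymm (span_mono ?_) (span_le.2 ?_)
      · rintro _ ⟨x, rfl⟩
        exact ⟨x, 1, rfl⟩
      · rintro _ ⟨x, v, rfl⟩
        have := smul_mem (span ℂ (range fun x ↦ RKHS.kerFun H x 1)) v (subset_span ⟨x, rfl⟩)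
        simpa [← map_smul] using this
    rw [dense_iff_topologicalClosure_eq_top, hspan]
    exact RKHS.kerFun_dense H
  · ext x y
    simp [H, gram_apply, RKHS.kerFun_apply, ← hC.1.apply y x]

section Gram

variable {𝕜 ι E F : Type*} [RCLike 𝕜] [NormedAddCommGroup E] [InnerProductSpace 𝕜 E]
  [NormedAddCommGroup F] [InnerProductSpace 𝕜 F]

theorem inner_linearCombination_linearCombination (v : ι → E) (f g : ι →₀ 𝕜) :
    ⟪linearCombination 𝕜 v f, linearCombination 𝕜 v g⟫_𝕜 =
      f.sum fun i a ↦ g.sum fun j b ↦ star a * gram 𝕜 v i j * b := by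
  simp only [linearCombination_apply, Finsupp.sum_inner, Finsupp.inner_sum, inner_smul_left,
    inner_smul_right, gram_apply, Finsupp.mul_sum]
  rw [Finsupp.sum_comm]
  refine Finsupp.sum_congr fun i _ ↦ ?_
  refine Finsupp.sum_congr fun j _ ↦ ?_
  simp only [RCLike.star_def]
  ring

theorem norm_linearCombination_eq_of_gram_eq {ξ : ι → E} {ξ' : ι → F}
    (h : gram 𝕜 ξ = gram 𝕜 ξ') (f : ι →₀ 𝕜) :
    ‖linearCombination 𝕜 ξ f‖ = ‖linearCombination 𝕜 ξ' f‖ := by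
  rw [norm_eq_sqrt_re_inner (𝕜 := 𝕜), norm_eq_sqrt_re_inner (𝕜 := 𝕜),
    inner_linearCombination_linearCombination, inner_linearCombination_linearCombination, h]

theorem denseRange_linearCombination_iff {v : ι → E} :
    DenseRange (linearCombination 𝕜 v) ↔ Dense (span 𝕜 (range v) : Set E) := by
  rw [DenseRange, ← LinearMap.coe_range, range_linearCombination]

theorem exists_linearIsometry_of_gram_eq [CompleteSpace F] {ξ : ι → E} {ξ' : ι → F}
    (hξ : Dense (span 𝕜 (range ξ) : Set E)) (h : gram 𝕜 ξ = gram 𝕜 ξ') :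
    ∃ U : E →ₗᵢ[𝕜] F, ∀ i, U (ξ i) = ξ' i := by
  have hdense := denseRange_linearCombination_iff.2 hξ
  have hnorm := norm_linearCombination_eq_of_gram_eq h
  set U := (linearCombination 𝕜 ξ').extendOfNorm (linearCombination 𝕜 ξ)
  have hU (f : ι →₀ 𝕜) : U (linearCombination 𝕜 ξ f) = linearCombination 𝕜 ξ' f :=
    LinearMap.extendOfNorm_eq hdense ⟨1, fun f ↦ by simp [hnorm]⟩ f
  have hU_norm (x : E) : ‖U x‖ = ‖x‖ :=
    hdense.induction_on x (isClosed_eq (continuous_norm.comp U.continuous) continuous_norm)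
      fun f ↦ by rw [hU, hnorm]
  exact ⟨⟨U.toLinearMap, hU_norm⟩, fun i ↦ by simpa using hU (Finsupp.single i 1)⟩

theorem exists_linearIsometryEquiv_of_gram_eq [CompleteSpace E] [CompleteSpace F]
    {ξ : ι → E} {ξ' : ι → F} (hξ : Dense (span 𝕜 (range ξ) : Set E))
    (hξ' : Dense (span 𝕜 (range ξ') : Set F)) (h : gram 𝕜 ξ = gram 𝕜 ξ') :
    ∃ U : E ≃ₗᵢ[𝕜] F, ∀ i, U (ξ i) = ξ' i := by
  have hdense := denseRange_linearCombination_iff.2 hξ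
  have hdense' := denseRange_linearCombination_iff.2 hξ'
  have hnorm (f : ι →₀ 𝕜) := (norm_linearCombination_eq_of_gram_eq h f).symm
  refine ⟨(LinearEquiv.refl 𝕜 (ι →₀ 𝕜)).extendOfIsometry _ _ hdense hdense' hnorm, fun i ↦ ?_⟩
  simpa using (LinearEquiv.refl 𝕜 (ι →₀ 𝕜)).extendOfIsometry_eq _ _ hdense hdense' hnorm
    (Finsupp.single i 1)

end Gram

theorem LinearIsometryEquiv.map_apply_eq_of_map_adjoint_apply_eq {𝕜 H K : Type*} [RCLike 𝕜]
    [NormedAddCommGroup H] [InnerProductSpace 𝕜 H] [CompleteSpace H]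
    [NormedAddCommGroup K] [InnerProductSpace 𝕜 K] [CompleteSpace K]
    (U : H ≃ₗᵢ[𝕜] K) {A : H →L[𝕜] H} {B : K →L[𝕜] K} {s : Set H}
    (hs : Dense (span 𝕜 s : Set H)) (h : ∀ x ∈ s, U (adjoint A x) = adjoint B (U x)) (y : H) :
    U (A y) = B (U y) := by
  have h' : (U : H →L[𝕜] K) ∘L adjoint A = adjoint B ∘L U := ContinuousLinearMap.ext_on hs h
  have h'' := congrArg adjoint h'
  simp only [adjoint_comp, adjoint_adjoint, LinearIsometryEquiv.adjoint_eq_symm] at h''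
  simpa using congr(U ($h'' (U y)))

section Cword

variable {d : ℕ} {H : Type*} [NormedAddCommGroup H] [InnerProductSpace ℂ H] [CompleteSpace H]

theorem adjoint_cword_nil_apply (S : Fin d → H →L[ℂ] H) (x : H) :
    adjoint (cword S []) x = x := by
  simp [cword, ← star_eq_adjoint]

theorem adjoint_cword_append_singleton_apply (S : Fin d → H →L[ℂ] H) (I : List (Fin d))
    (k : Fin d) (x : H) :
    adjoint (cword S (I ++ [k])) x = adjoint (S k) (adjoint (cword S I) x) := by
  simp [cword, ← star_eq_adjoint]

theorem adjoint_cword_apply_of_adjoint_apply {v : Fin d → H →L[ℂ] H} {ξ : List (Fin d) → H}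
    (hv : ∀ k I, adjoint (v k) (ξ I) = ξ (I ++ [k])) (I : List (Fin d)) :
    adjoint (cword v I) (ξ []) = ξ I := by
  induction I using List.reverseRecOn with
  | nil => exact adjoint_cword_nil_apply v _
  | append_singleton I k ih => rw [adjoint_cword_append_singleton_apply, ih, hv]

theorem isPopescuSystem_adjoint_of_sum_inner {w : Fin d → H →L[ℂ] H}
    (hw : ∀ x y, ∑ k, ⟪w k x, w k y⟫ = ⟪x, y⟫) : IsPopescuSystem fun k ↦ adjoint (w k) := by
  ext x
  refine ext_inner_left ℂ fun y ↦ ?_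
  simp [inner_sum, adjoint_inner_right, hw]

theorem exists_isPopescuSystem_adjoint_apply {ι : Type*} {ξ : ι → H}
    (hξ : Dense (span ℂ (range ξ) : Set H)) (σ : Fin d → ι → ι)
    (hσ : ∀ I J, ∑ k, ⟪ξ (σ k I), ξ (σ k J)⟫ = ⟪ξ I, ξ J⟫) :
    ∃ v : Fin d → H →L[ℂ] H, IsPopescuSystem v ∧ ∀ k I, adjoint (v k) (ξ I) = ξ (σ k I) := by
  let η (I : ι) : PiLp 2 (fun _ : Fin d ↦ H) := WithLp.toLp 2 fun k ↦ ξ (σ k I)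
  obtain ⟨W, hW⟩ := exists_linearIsometry_of_gram_eq (ξ' := η) hξ <| by
    ext I J
    simp [η, gram_apply, PiLp.inner_apply, hσ]
  let w (k : Fin d) : H →L[ℂ] H := PiLp.proj 2 (fun _ ↦ H) k ∘L W.toContinuousLinearMap
  refine ⟨fun k ↦ adjoint (w k), isPopescuSystem_adjoint_of_sum_inner fun x y ↦ ?_, fun k I ↦ ?_⟩
  · rw [← W.inner_map_map x y, PiLp.inner_apply]
    simp [w]
  · simp [w, hW, η]

end Cword

theorem popescu_system_of_positive_definite_kernel_general {d : ℕ}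
    (C : List (Fin d) → List (Fin d) → ℂ)
    (h1 : C [] [] = 1)
    (h2 : ∀ lam : List (Fin d) →₀ ℂ,
      0 ≤ ∑ I ∈ lam.support, ∑ J ∈ lam.support, (starRingEnd ℂ) (lam I) * C I J * lam J)
    (h3 : ∀ I J : List (Fin d), ∑ i : Fin d, C (I ++ [i]) (J ++ [i]) = C I J) :
    ∃ (K : Type) (_ : NormedAddCommGroup K) (_ : InnerProductSpace ℂ K) (_ : CompleteSpace K)
      (Ω : K) (v : Fin d → K →L[ℂ] K),
      ‖Ω‖ = 1 ∧ IsPopescuSystem v ∧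
      Dense ((Submodule.span ℂ
          {x : K | ∃ I : List (Fin d), x = adjoint (cword v I) Ω} : Submodule ℂ K) : Set K) ∧
      (∀ I J : List (Fin d), C I J = ⟪adjoint (cword v I) Ω, adjoint (cword v J) Ω⟫) ∧
      (∀ (K' : Type) (_ : NormedAddCommGroup K') (_ : InnerProductSpace ℂ K')
          (_ : CompleteSpace K') (Ω' : K') (v' : Fin d → K' →L[ℂ] K'),
        ‖Ω'‖ = 1 → IsPopescuSystem v' →
        Dense ((Submodule.span ℂ
            {x : K' | ∃ I : List (Fin d), x = adjoint (cword v' I) Ω'} : Submodule ℂ K') : Set K') →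
        (∀ I J : List (Fin d), C I J = ⟪adjoint (cword v' I) Ω', adjoint (cword v' J) Ω'⟫) →
        ∃ U : K ≃ₗᵢ[ℂ] K', U Ω = Ω' ∧ ∀ (k : Fin d) (ξ : K), U (v k ξ) = v' k (U ξ)) := by
  obtain ⟨K, _, _, _, ξ, hξ, hgram⟩ :=
    (Matrix.posSemidef_of_forall_finsuppSum_nonneg h2).exists_dense_span_gram_eq
  have hC (I J : List (Fin d)) : C I J = ⟪ξ I, ξ J⟫ := by rw [← hgram]; rfl
  obtain ⟨v, hv, hvξ⟩ := exists_isPopescuSystem_adjoint_apply hξ (fun k I ↦ I ++ [k])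
    fun I J ↦ by simp only [← hC, h3]
  have hvΩ := adjoint_cword_apply_of_adjoint_apply hvξ
  have hrange {H : Type} (ξ : List (Fin d) → H) : {x | ∃ I, x = ξ I} = range ξ :=
    Set.ext fun _ ↦ exists_congr fun _ ↦ eq_comm
  refine ⟨K, _, _, _, ξ [], v, ?_, hv, by simpa [hvΩ, hrange] using hξ, by simpa [hvΩ] using hC,
    ?_⟩
  · rw [norm_eq_sqrt_re_inner (𝕜 := ℂ), ← hC, h1]
    simp
  intro K' _ _ _ Ω' v' _ _ hdense' hC'
  obtain ⟨U, hU⟩ := exists_linearIsometryEquiv_of_gram_eq hξ (by rwa [hrange] at hdense')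
    (by ext I J; simp [gram_apply, ← hC, hC'])
  refine ⟨U, by simpa [adjoint_cword_nil_apply] using hU [],
    fun k ↦ U.map_apply_eq_of_map_adjoint_apply_eq hξ ?_⟩
  rintro _ ⟨I, rfl⟩
  rw [hvξ, hU, hU, adjoint_cword_append_singleton_apply]

/-- A function `C` on pairs of multi-indices which is normalized,
positive definite and satisfies the Cuntz-type consistency relation
`∑ᵢ C(Ii, Ji) = C(I, J)` arises from a unique (up to unitary equivalence) Popescu system
`(K, Ω, v)` with `{v_I* Ω}` total in `K` and `C(I,J) = ⟨v_I* Ω, v_J* Ω⟩`. -/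
theorem popescu_system_of_positive_definite_kernel {d : ℕ} (hd : 2 ≤ d)
    (C : List (Fin d) → List (Fin d) → ℂ)
    (h1 : C [] [] = 1)
    (h2 : ∀ lam : List (Fin d) →₀ ℂ,
      0 ≤ ∑ I ∈ lam.support, ∑ J ∈ lam.support, (starRingEnd ℂ) (lam I) * C I J * lam J)
    (h3 : ∀ I J : List (Fin d), ∑ i : Fin d, C (I ++ [i]) (J ++ [i]) = C I J) :
    ∃ (K : Type) (_ : NormedAddCommGroup K) (_ : InnerProductSpace ℂ K) (_ : CompleteSpace K)
      (Ω : K) (v : Fin d → K →L[ℂ] K),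
      ‖Ω‖ = 1 ∧ IsPopescuSystem v ∧
      Dense ((Submodule.span ℂ
          {x : K | ∃ I : List (Fin d), x = adjoint (cword v I) Ω} : Submodule ℂ K) : Set K) ∧
      (∀ I J : List (Fin d), C I J = ⟪adjoint (cword v I) Ω, adjoint (cword v J) Ω⟫) ∧
      (∀ (K' : Type) (_ : NormedAddCommGroup K') (_ : InnerProductSpace ℂ K')
          (_ : CompleteSpace K') (Ω' : K') (v' : Fin d → K' →L[ℂ] K'),
        ‖Ω'‖ = 1 → IsPopescuSystem v' →
        Dense ((Submodule.span ℂ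
            {x : K' | ∃ I : List (Fin d), x = adjoint (cword v' I) Ω'} : Submodule ℂ K') : Set K') →
        (∀ I J : List (Fin d), C I J = ⟪adjoint (cword v' I) Ω', adjoint (cword v' J) Ω'⟫) →
        ∃ U : K ≃ₗᵢ[ℂ] K', U Ω = Ω' ∧ ∀ (k : Fin d) (ξ : K), U (v k ξ) = v' k (U ξ)) :=
  popescu_system_of_positive_definite_kernel_general C h1 h2 h3
end
end

section
/- Let (v_1,…,v_d) be a Popescu system on K, M = {v_k, v_k* : 1 ≤ k ≤ d}'' and suppose that the commutant satisfies M' = {x ∈ B(K) : Σ_{k=1}^d v_k x v_k* = x}. Then in any minimal Popescu dilation (H, P, (S_1,…,S_d)) of (v_1,…,v_d), the projection P belongs to the von Neumann algebra {S_k, S_k* : 1 ≤ k ≤ d}'' generated by the Cuntz family. -/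
open ContinuousLinearMap Filter
open scoped ComplexInnerProductSpace ComplexOrder

noncomputable section

/-!
Let `T` commute with every `Sₖ` and `Sₖ*`, and let `x = ι* T ι` be its compression to `K`.
Since `Sₖ* ι = ι vₖ*` and `∑ₖ Sₖ Sₖ* = 1`, the compression is a fixed point of
`y ↦ ∑ₖ vₖ y vₖ*`, so by hypothesis it commutes with every `vₖ*`. Then `T ι ξ` and `ι x ξ` have
the same inner products with all the vectors `S_I ι η`, which are total by minimality; hence
`T ι = ι x`, i.e. `K` is invariant under `T`. The same holds for `T*`, so `K` reduces `T` and `P`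
commutes with `T`.
-/

section

variable {d : ℕ} {K H : Type*}
  [NormedAddCommGroup K] [InnerProductSpace ℂ K] [CompleteSpace K]
  [NormedAddCommGroup H] [InnerProductSpace ℂ H] [CompleteSpace H]

theorem commute_adjoint_cword {S : Fin d → H →L[ℂ] H} {T : H →L[ℂ] H}
    (h : ∀ k, Commute (adjoint (S k)) T) (I : List (Fin d)) :
    Commute (adjoint (cword S I)) T := by
  induction I with
  | nil => simpa [cword, one_def, adjoint_id] using Commute.one_left T
  | cons k I ih =>
    change Commute (adjoint (S k ∘L cword S I)) T
    rw [adjoint_comp]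
    exact ih.mul_left (h k)

theorem adjoint_cword_comp_of_forall {S : Fin d → H →L[ℂ] H} {v : Fin d → K →L[ℂ] K}
    {ι : K →L[ℂ] H} (h : ∀ k, adjoint (S k) ∘L ι = ι ∘L adjoint (v k)) (I : List (Fin d)) :
    adjoint (cword S I) ∘L ι = ι ∘L adjoint (cword v I) := by
  induction I with
  | nil => simp [cword, one_def, adjoint_id]
  | cons k I ih =>
    change adjoint (S k ∘L cword S I) ∘L ι = ι ∘L adjoint (v k ∘L cword v I)
    rw [adjoint_comp, adjoint_comp, comp_assoc, h k, ← comp_assoc, ih, comp_assoc]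

theorem comp_proj_eq_proj_comp_of_invariant {ι : K →L[ℂ] H} {T : H →L[ℂ] H}
    (hT : T ∘L ι = ι ∘L adjoint ι ∘L T ∘L ι)
    (hT' : adjoint T ∘L ι = ι ∘L adjoint ι ∘L adjoint T ∘L ι) :
    T ∘L ι ∘L adjoint ι = (ι ∘L adjoint ι) ∘L T := by
  have hT'' : adjoint ι ∘L T = adjoint ι ∘L T ∘L ι ∘L adjoint ι := by
    simpa [adjoint_comp, comp_assoc] using congr_arg adjoint hT'
  rw [← comp_assoc, hT, comp_assoc ι (adjoint ι) T, hT'']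
  simp only [comp_assoc]

namespace IsMinimalDilation

variable {v : Fin d → K →L[ℂ] K} {ι : K →L[ℂ] H} {S : Fin d → H →L[ℂ] H}

theorem adjoint_comp_iota_s11 (hdil : IsMinimalDilation v ι S) (k : Fin d) :
    adjoint (S k) ∘L ι = ι ∘L adjoint (v k) := by
  obtain ⟨-, hιι, hco, hcomp, -⟩ := hdil
  have hι : ∀ ξ, adjoint ι (ι ξ) = ξ := fun ξ => congr($hιι ξ)
  have hv : adjoint (v k) = adjoint ι ∘L adjoint (S k) ∘L ι := by
    rw [← hcomp k, adjoint_comp, adjoint_comp, adjoint_adjoint, comp_assoc]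
  ext ξ
  simpa [hv, hι] using congr($(hco k) (ι ξ)).symm

theorem eq_of_forall_adjoint_cword_eq (hdil : IsMinimalDilation v ι S) {a b : H}
    (h : ∀ I, adjoint ι (adjoint (cword S I) a) = adjoint ι (adjoint (cword S I) b)) :
    a = b := by
  refine hdil.2.2.2.2.eq_of_inner_left ℂ fun w hw => LinearMap.eqOn_span'
    (f := (innerSL ℂ a).toLinearMap) (g := (innerSL ℂ b).toLinearMap) ?_ hw
  rintro _ ⟨I, η, rfl⟩
  simp only [coe_coe, innerSL_apply_apply]
  rw [← adjoint_inner_left, ← adjoint_inner_left, ← adjoint_inner_left (cword S I),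
    ← adjoint_inner_left ι, h]

theorem sum_comp_compression_comp_adjoint_eq (hdil : IsMinimalDilation v ι S) {T : H →L[ℂ] H}
    (hT : ∀ k, Commute (adjoint (S k)) T) :
    ∑ k, v k ∘L (adjoint ι ∘L T ∘L ι) ∘L adjoint (v k) = adjoint ι ∘L T ∘L ι := by
  have hS : ∀ k ξ, ι (adjoint (v k) ξ) = adjoint (S k) (ι ξ) :=
    fun k ξ => congr($(hdil.adjoint_comp_iota_s11 k) ξ).symm
  have hv : ∀ k y, v k (adjoint ι y) = adjoint ι (S k y) := fun k y => by
    simpa [adjoint_comp] using congr($(congr_arg adjoint (hdil.adjoint_comp_iota_s11 k)) y).symm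
  have hTS : ∀ k y, T (adjoint (S k) y) = adjoint (S k) (T y) :=
    fun k y => congr($((hT k).eq) y).symm
  ext ξ
  have hCuntz := congr($(hdil.1.2) (T (ι ξ)))
  simp only [sum_apply, comp_apply, one_apply_eq_self] at hCuntz ⊢
  simp only [hS, hTS, hv, ← map_sum, hCuntz]

theorem comp_iota_eq (hdil : IsMinimalDilation v ι S) {T : H →L[ℂ] H}
    (hT : ∀ k, Commute (adjoint (S k)) T)
    (hx : ∀ k, Commute (adjoint (v k)) (adjoint ι ∘L T ∘L ι)) :
    T ∘L ι = ι ∘L adjoint ι ∘L T ∘L ι := by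
  set x := adjoint ι ∘L T ∘L ι with hx_def
  have hι : ∀ ξ, adjoint ι (ι ξ) = ξ := fun ξ => congr($(hdil.2.1) ξ)
  ext ξ
  refine hdil.eq_of_forall_adjoint_cword_eq fun I => ?_
  have hSv : ∀ η, adjoint (cword S I) (ι η) = ι (adjoint (cword v I) η) :=
    fun η => congr($(adjoint_cword_comp_of_forall hdil.adjoint_comp_iota_s11 I) η)
  calc adjoint ι (adjoint (cword S I) (T (ι ξ)))
      = x (adjoint (cword v I) ξ) := by
        rw [hx_def, comp_apply, comp_apply, ← hSv]
        exact congr_arg (adjoint ι) congr($((commute_adjoint_cword hT I).eq) (ι ξ))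
    _ = adjoint (cword v I) (x ξ) := congr($((commute_adjoint_cword hx I).eq) ξ).symm
    _ = adjoint ι (adjoint (cword S I) (ι (x ξ))) := by rw [hSv, hι]

end IsMinimalDilation

end

theorem proj_mem_cuntz_vN_of_commutant_eq_fixedPoints_general {d : ℕ}
    {K H : Type*} [NormedAddCommGroup K] [InnerProductSpace ℂ K] [CompleteSpace K]
    [NormedAddCommGroup H] [InnerProductSpace ℂ H] [CompleteSpace H]
    (v : Fin d → K →L[ℂ] K)
    (M : Set (K →L[ℂ] K))
    (hM : M = Set.centralizer (Set.centralizer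
        (Set.range v ∪ Set.range (fun k => adjoint (v k)))))
    (hMcomm : Set.centralizer M
        = {x : K →L[ℂ] K | (∑ k : Fin d, v k ∘L x ∘L adjoint (v k)) = x})
    (ι : K →L[ℂ] H) (S : Fin d → H →L[ℂ] H) (hdil : IsMinimalDilation v ι S) :
    (ι ∘L adjoint ι) ∈ Set.centralizer (Set.centralizer
        (Set.range S ∪ Set.range (fun k => adjoint (S k)))) := by
  have hfix : ∀ x : K →L[ℂ] K, ∑ k, v k ∘L x ∘L adjoint (v k) = x →
      ∀ k, Commute (adjoint (v k)) x := fun x hx k => by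
    have hxM : x ∈ Set.centralizer M := hMcomm ▸ hx
    exact hxM _ (hM ▸ Set.subset_centralizer_centralizer (Or.inr ⟨k, rfl⟩))
  intro T hT
  have hTS : ∀ k, Commute (adjoint (S k)) T := fun k => hT _ (Or.inr ⟨k, rfl⟩)
  have hTS' : ∀ k, Commute (adjoint (S k)) (adjoint T) := fun k => by
    simpa [← star_eq_adjoint] using Commute.star_star (hT _ (Or.inl ⟨k, rfl⟩))
  exact comp_proj_eq_proj_comp_of_invariant
    (hdil.comp_iota_eq hTS (hfix _ (hdil.sum_comp_compression_comp_adjoint_eq hTS)))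
    (hdil.comp_iota_eq hTS' (hfix _ (hdil.sum_comp_compression_comp_adjoint_eq hTS')))

/-- If the Popescu system `v` on `K` satisfies
`M' = {x : ∑ₖ vₖ x vₖ* = x}` for `M = {vₖ, vₖ*}''`, then in any minimal Popescu dilation
`(H, P, S)` (with `P = ι ∘ ι*`) the projection `P` belongs to `{Sₖ, Sₖ*}''`. -/
theorem proj_mem_cuntz_vN_of_commutant_eq_fixedPoints {d : ℕ} (hd : 2 ≤ d)
    {K H : Type*} [NormedAddCommGroup K] [InnerProductSpace ℂ K] [CompleteSpace K]
    [NormedAddCommGroup H] [InnerProductSpace ℂ H] [CompleteSpace H]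
    (v : Fin d → K →L[ℂ] K) (hv : IsPopescuSystem v)
    (M : Set (K →L[ℂ] K))
    (hM : M = Set.centralizer (Set.centralizer
        (Set.range v ∪ Set.range (fun k => adjoint (v k)))))
    (hMcomm : Set.centralizer M
        = {x : K →L[ℂ] K | (∑ k : Fin d, v k ∘L x ∘L adjoint (v k)) = x})
    (ι : K →L[ℂ] H) (S : Fin d → H →L[ℂ] H) (hdil : IsMinimalDilation v ι S) :
    (ι ∘L adjoint ι) ∈ Set.centralizer (Set.centralizer
        (Set.range S ∪ Set.range (fun k => adjoint (S k)))) :=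
  proj_mem_cuntz_vN_of_commutant_eq_fixedPoints_general v M hM hMcomm ι S hdil
end
end

section
/- Let (S_1,…,S_d) and (Ŝ_1,…,Ŝ_d) be two Cuntz families on H such that every S_i, S_i* commutes with every Ŝ_j, Ŝ_j*. Then V = Σ_{k=1}^d S_k Ŝ_k* is a unitary operator on H; for every E ∈ B(H) commuting with all Ŝ_k and Ŝ_k* one has V E V* = Σ_{k=1}^d S_k E S_k*, and for every E' ∈ B(H) commuting with all S_k and S_k* one has V* E' V = Σ_{k=1}^d Ŝ_k E' Ŝ_k*. -/
open ContinuousLinearMap Filter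
open scoped ComplexInnerProductSpace ComplexOrder

noncomputable section

/-- Auxiliary collapsing lemma: `(∑ⱼ Tⱼ Sⱼ*) E (∑ₖ Sₖ Tₖ*) = ∑ₖ Tₖ E Tₖ*`
whenever `Sᵢ* Sⱼ = δᵢⱼ` and `E` commutes with the `Sⱼ*`. -/
theorem collapse_key {d : ℕ} {H : Type*} [NormedAddCommGroup H] [InnerProductSpace ℂ H]
    [CompleteSpace H] (S T : Fin d → H →L[ℂ] H)
    (hS1 : ∀ i j : Fin d, adjoint (S i) * S j = if i = j then 1 else 0)
    (E : H →L[ℂ] H) (hE : ∀ k : Fin d, adjoint (S k) * E = E * adjoint (S k)) :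
    (∑ j : Fin d, T j * adjoint (S j)) * E * (∑ k : Fin d, S k * adjoint (T k)) =
      ∑ k : Fin d, T k * E * adjoint (T k) := by
  rw [Finset.sum_mul, Finset.sum_mul]
  calc ∑ j : Fin d, (T j * adjoint (S j) * E) * (∑ k : Fin d, S k * adjoint (T k))
      = ∑ j : Fin d, ∑ k : Fin d,
          T j * E * (adjoint (S j) * S k) * adjoint (T k) := by
        refine Finset.sum_congr rfl fun j _ => ?_
        rw [Finset.mul_sum]
        refine Finset.sum_congr rfl fun k _ => ?_
        calc T j * adjoint (S j) * E * (S k * adjoint (T k))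
            = T j * (adjoint (S j) * E) * (S k * adjoint (T k)) := by
              rw [mul_assoc (T j)]
          _ = T j * (E * adjoint (S j)) * (S k * adjoint (T k)) := by rw [hE j]
          _ = T j * E * (adjoint (S j) * S k) * adjoint (T k) := by
              simp only [mul_assoc]
    _ = ∑ k : Fin d, T k * E * adjoint (T k) := by
        simp [hS1, mul_ite, ite_mul, mul_one, mul_zero, zero_mul,
          Finset.sum_ite_eq, Finset.sum_ite_eq']

/-- For two commuting Cuntz families `S`, `T` on `H`, the operator
`V = ∑ₖ Sₖ Tₖ*` is unitary; conjugation by `V` implements `Λ` on operators commuting with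
the `T`-family, and conjugation by `V*` implements `Λ̂` on operators commuting with the
`S`-family. -/
theorem shift_unitary {d : ℕ} (hd : 2 ≤ d)
    {H : Type*} [NormedAddCommGroup H] [InnerProductSpace ℂ H] [CompleteSpace H]
    (S T : Fin d → H →L[ℂ] H) (hS : IsCuntzFamily S) (hT : IsCuntzFamily T)
    (hcomm : ∀ i j : Fin d,
      Commute (S i) (T j) ∧ Commute (S i) (adjoint (T j)) ∧
      Commute (adjoint (S i)) (T j) ∧ Commute (adjoint (S i)) (adjoint (T j)))
    (V : H →L[ℂ] H) (hV : V = ∑ k : Fin d, S k ∘L adjoint (T k)) :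
    (adjoint V ∘L V = 1 ∧ V ∘L adjoint V = 1) ∧
    (∀ E : H →L[ℂ] H, (∀ k : Fin d, Commute E (T k) ∧ Commute E (adjoint (T k))) →
      V ∘L E ∘L adjoint V = ∑ k : Fin d, S k ∘L E ∘L adjoint (S k)) ∧
    (∀ E' : H →L[ℂ] H, (∀ k : Fin d, Commute E' (S k) ∧ Commute E' (adjoint (S k))) →
      adjoint V ∘L E' ∘L V = ∑ k : Fin d, T k ∘L E' ∘L adjoint (T k)) := by
  have hS1 : ∀ i j : Fin d, adjoint (S i) * S j = if i = j then 1 else 0 := hS.1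
  have hT1 : ∀ i j : Fin d, adjoint (T i) * T j = if i = j then 1 else 0 := hT.1
  have hS2 : ∑ k : Fin d, S k * adjoint (S k) = 1 := hS.2
  have hT2 : ∑ k : Fin d, T k * adjoint (T k) = 1 := hT.2
  have hVm : V = ∑ k : Fin d, S k * adjoint (T k) := hV
  have hadj : adjoint V = ∑ k : Fin d, T k * adjoint (S k) := by
    rw [hVm, map_sum]
    refine Finset.sum_congr rfl fun k _ => ?_
    rw [show S k * adjoint (T k) = (S k) ∘L adjoint (T k) from rfl, adjoint_comp,
      adjoint_adjoint]
    rfl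
  refine ⟨⟨?_, ?_⟩, ?_, ?_⟩
  · show adjoint V * V = 1
    have h := collapse_key S T hS1 1 (fun k => by rw [mul_one, one_mul])
    simp only [mul_one] at h
    rw [hadj, hVm, h]
    exact hT2
  · show V * adjoint V = 1
    have h := collapse_key T S hT1 1 (fun k => by rw [mul_one, one_mul])
    simp only [mul_one] at h
    rw [hadj, hVm, h]
    exact hS2
  · intro E hE
    show V * E * adjoint V = ∑ k : Fin d, S k * E * adjoint (S k)
    rw [hadj, hVm]
    exact collapse_key T S hT1 E (fun k => ((hE k).2.eq).symm)
  · intro E' hE'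
    show adjoint V * E' * V = ∑ k : Fin d, T k * E' * adjoint (T k)
    rw [hadj, hVm]
    exact collapse_key S T hS1 E' (fun k => ((hE' k).2.eq).symm)
end
end
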